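/- arXiv:2001.05998 — 2 statements merged into one kernel-verified Lean document; each statement's English description precedes it below -/
import Mathlib

section
/- Under the setup of the previous statement (θ uniform on {1,...,K}, S with conditional law H given θ, query Q equal to the partition block containing θ), the random variables S and Q are independent if and only if every block L_j of the partition satisfies (1/|L_j|)·H·b_{L_j} = (1/K)·H·𝟙. -/
/-!
Under the model, `P(S = t, θ ∈ s) = K⁻¹ (H b_s)_t` for every set `s` of latent values, so
`P(S = t) = K⁻¹ (H 𝟙)_t` and `P(θ ∈ s) = |s| / K`. Independence at `(t, L_j)` thus reads
`K⁻¹ (H b_{L_j})_t = K⁻¹ (H 𝟙)_t · |L_j| / K`, which is the `t`-th entry of the privacy identity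
multiplied by `|L_j| / K`.
-/

open MeasureTheory ProbabilityTheory

noncomputable def indVec {K : ℕ} (S : Finset (Fin K)) : Fin K → ℝ :=
  fun i => if i ∈ S then 1 else 0

open Finset

lemma indVec_univ {K : ℕ} : indVec (univ : Finset (Fin K)) = 1 := by
  funext k
  simp [indVec]

lemma indVec_nonneg {K : ℕ} (s : Finset (Fin K)) : 0 ≤ indVec s :=
  fun k => by unfold indVec; split_ifs <;> norm_num

lemma mulVec_indVec_apply {T K : ℕ} (H : Matrix (Fin T) (Fin K) ℝ) (s : Finset (Fin K))
    (t : Fin T) : H.mulVec (indVec s) t = ∑ k ∈ s, H t k := by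
  simp [Matrix.mulVec, dotProduct, indVec, sum_ite_mem]

lemma measure_inter_preimage_finset {Ω α : Type*} [MeasurableSpace Ω] [MeasurableSpace α]
    [MeasurableSingletonClass α] (μ : Measure Ω) {f : Ω → α} (hf : Measurable f)
    (A : Set Ω) (s : Finset α) :
    μ (A ∩ f ⁻¹' s) = ∑ a ∈ s, μ (A ∩ f ⁻¹' {a}) := by
  have hrestrict : ∀ B : Set α, MeasurableSet B → μ (A ∩ f ⁻¹' B) = μ.restrict A (f ⁻¹' B) :=
    fun B hB => by rw [Measure.restrict_apply (hf hB), Set.inter_comm]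
  rw [hrestrict _ s.measurableSet, ← sum_measure_preimage_singleton s
    fun a _ => hf (measurableSet_singleton a)]
  exact sum_congr rfl fun a _ => (hrestrict _ (measurableSet_singleton a)).symm

section Model

variable {Ω : Type*} [MeasurableSpace Ω] {μ : Measure Ω} {T K : ℕ}
  {θ : Ω → Fin K} {S : Ω → Fin T}

lemma measure_preimage_finset_of_uniform (hθ : Measurable θ)
    (huniform : ∀ k : Fin K, μ (θ ⁻¹' {k}) = ENNReal.ofReal ((K : ℝ))⁻¹)
    (s : Finset (Fin K)) :
    μ (θ ⁻¹' s) = ENNReal.ofReal (#s * ((K : ℝ))⁻¹) := by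
  rw [← Set.univ_inter (θ ⁻¹' s), measure_inter_preimage_finset μ hθ]
  simp [huniform, ENNReal.ofReal_mul]

lemma measure_inter_preimage_finset_eq_mulVec (Hm : Matrix (Fin T) (Fin K) ℝ)
    (hnn : ∀ t k, 0 ≤ Hm t k) (hθ : Measurable θ)
    (huniform : ∀ k : Fin K, μ (θ ⁻¹' {k}) = ENNReal.ofReal ((K : ℝ))⁻¹)
    (hjoint : ∀ (k : Fin K) (t : Fin T),
      μ (S ⁻¹' {t} ∩ θ ⁻¹' {k}) = ENNReal.ofReal (Hm t k) * μ (θ ⁻¹' {k}))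
    (t : Fin T) (s : Finset (Fin K)) :
    μ (S ⁻¹' {t} ∩ θ ⁻¹' s) = ENNReal.ofReal ((K : ℝ)⁻¹ * Hm.mulVec (indVec s) t) := by
  rw [measure_inter_preimage_finset μ hθ, mulVec_indVec_apply, mul_sum,
    ENNReal.ofReal_sum_of_nonneg fun k _ => mul_nonneg (by positivity) (hnn t k)]
  refine sum_congr rfl fun k _ => ?_
  rw [hjoint, huniform, ← ENNReal.ofReal_mul (hnn t k), mul_comm]

lemma measure_preimage_singleton_eq_mulVec_one (Hm : Matrix (Fin T) (Fin K) ℝ)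
    (hnn : ∀ t k, 0 ≤ Hm t k) (hθ : Measurable θ)
    (huniform : ∀ k : Fin K, μ (θ ⁻¹' {k}) = ENNReal.ofReal ((K : ℝ))⁻¹)
    (hjoint : ∀ (k : Fin K) (t : Fin T),
      μ (S ⁻¹' {t} ∩ θ ⁻¹' {k}) = ENNReal.ofReal (Hm t k) * μ (θ ⁻¹' {k}))
    (t : Fin T) :
    μ (S ⁻¹' {t}) = ENNReal.ofReal ((K : ℝ)⁻¹ * Hm.mulVec 1 t) := by
  rw [← indVec_univ, ← measure_inter_preimage_finset_eq_mulVec Hm hnn hθ huniform hjoint,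
    coe_univ, Set.preimage_univ, Set.inter_univ]

lemma measure_inter_eq_mul_iff (Hm : Matrix (Fin T) (Fin K) ℝ)
    (hnn : ∀ t k, 0 ≤ Hm t k) (hθ : Measurable θ)
    (huniform : ∀ k : Fin K, μ (θ ⁻¹' {k}) = ENNReal.ofReal ((K : ℝ))⁻¹)
    (hjoint : ∀ (k : Fin K) (t : Fin T),
      μ (S ⁻¹' {t} ∩ θ ⁻¹' {k}) = ENNReal.ofReal (Hm t k) * μ (θ ⁻¹' {k}))
    (t : Fin T) {s : Finset (Fin K)} (hs : s.Nonempty) :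
    μ (S ⁻¹' {t} ∩ θ ⁻¹' s) = μ (S ⁻¹' {t}) * μ (θ ⁻¹' s) ↔
      (#s : ℝ)⁻¹ * Hm.mulVec (indVec s) t = (K : ℝ)⁻¹ * Hm.mulVec 1 t := by
  have hK : (0 : ℝ) < K := Nat.cast_pos.mpr hs.choose.pos
  have hcard : (0 : ℝ) < #s := Nat.cast_pos.mpr hs.card_pos
  have hmulVec_nonneg : ∀ v : Fin K → ℝ, 0 ≤ v → 0 ≤ (K : ℝ)⁻¹ * Hm.mulVec v t := fun v hv =>
    mul_nonneg (by positivity) (dotProduct_nonneg_of_nonneg (hnn t) hv)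
  rw [measure_inter_preimage_finset_eq_mulVec Hm hnn hθ huniform hjoint,
    measure_preimage_singleton_eq_mulVec_one Hm hnn hθ huniform hjoint,
    measure_preimage_finset_of_uniform hθ huniform,
    ← ENNReal.ofReal_mul (hmulVec_nonneg 1 zero_le_one),
    ENNReal.ofReal_eq_ofReal_iff (hmulVec_nonneg _ (indVec_nonneg s))
      (mul_nonneg (hmulVec_nonneg 1 zero_le_one) (by positivity))]
  constructor <;> intro h <;> field_simp at h ⊢ <;> linear_combination h

end Model

theorem lvpir_independence_iff_privacy_general {T K ℓ : ℕ}
    (Hm : Matrix (Fin T) (Fin K) ℝ)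
    (hnn : ∀ t k, 0 ≤ Hm t k)
    {Ω : Type*} [MeasurableSpace Ω] (μ : Measure Ω)
    (θ : Ω → Fin K) (S : Ω → Fin T)
    (hθ : Measurable θ)
    (huniform : ∀ k : Fin K, μ (θ ⁻¹' {k}) = ENNReal.ofReal ((K : ℝ))⁻¹)
    (hjoint : ∀ (k : Fin K) (t : Fin T),
      μ (S ⁻¹' {t} ∩ θ ⁻¹' {k}) = ENNReal.ofReal (Hm t k) * μ (θ ⁻¹' {k}))
    (L : Fin ℓ → Finset (Fin K))
    (hLne : ∀ j, (L j).Nonempty) :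
    (∀ (t : Fin T) (j : Fin ℓ),
        μ (S ⁻¹' {t} ∩ θ ⁻¹' ↑(L j)) = μ (S ⁻¹' {t}) * μ (θ ⁻¹' ↑(L j)))
      ↔ (∀ j : Fin ℓ,
          (((L j).card : ℝ))⁻¹ • Hm.mulVec (indVec (L j))
            = ((K : ℝ))⁻¹ • Hm.mulVec 1) := by
  refine forall_comm.trans (forall_congr' fun j => ?_)
  simp only [funext_iff, Pi.smul_apply, smul_eq_mul]
  exact forall_congr' fun t =>
    measure_inter_eq_mul_iff Hm hnn hθ huniform hjoint t (hLne j)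

/-- with θ uniform, S drawn according to the columns of H given θ, and the
query equal to the partition block containing θ, the latent variable S is independent of
the query if and only if every block satisfies `(1/|L_j|)·H·b_{L_j} = (1/K)·H·𝟙`. -/
theorem lvpir_independence_iff_privacy {T K ℓ : ℕ}
    (Hm : Matrix (Fin T) (Fin K) ℝ)
    (hnn : ∀ t k, 0 ≤ Hm t k) (hcol : ∀ k, ∑ t, Hm t k = 1)
    {Ω : Type*} [MeasurableSpace Ω] (μ : Measure Ω) [IsProbabilityMeasure μ]
    (θ : Ω → Fin K) (S : Ω → Fin T)
    (hθ : Measurable θ) (hS : Measurable S)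
    (huniform : ∀ k : Fin K, μ (θ ⁻¹' {k}) = ENNReal.ofReal ((K : ℝ))⁻¹)
    (hjoint : ∀ (k : Fin K) (t : Fin T),
      μ (S ⁻¹' {t} ∩ θ ⁻¹' {k}) = ENNReal.ofReal (Hm t k) * μ (θ ⁻¹' {k}))
    (L : Fin ℓ → Finset (Fin K))
    (hLne : ∀ j, (L j).Nonempty)
    (hLdisj : ∀ j j', j ≠ j' → Disjoint (L j) (L j'))
    (hLcover : ∀ k : Fin K, ∃ j, k ∈ L j) :
    (∀ (t : Fin T) (j : Fin ℓ),
        μ (S ⁻¹' {t} ∩ θ ⁻¹' ↑(L j)) = μ (S ⁻¹' {t}) * μ (θ ⁻¹' ↑(L j)))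
      ↔ (∀ j : Fin ℓ,
          (((L j).card : ℝ))⁻¹ • Hm.mulVec (indVec (L j))
            = ((K : ℝ))⁻¹ • Hm.mulVec 1) :=
  lvpir_independence_iff_privacy_general Hm hnn μ θ S hθ huniform hjoint L hLne
end

section
/- If H is a T×K real matrix with full column rank, then the only partition {L_1,...,L_ℓ} of {1,...,K} satisfying (1/|L_j|)·H·b_{L_j} = (1/K)·H·𝟙 for every block L_j is the trivial partition {L_1} = {{1,...,K}}, and hence the minimum average download cost (1/K)·Σ_j |L_j|² over such partitions equals K. -/
/-!
Full column rank makes `H.mulVec` injective, so the privacy condition for a block `L_j` says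
that the uniform distribution on `L_j` is the uniform distribution on all of `{1,…,K}`; hence
every block is everything, and disjointness leaves room for only one block.
-/

open Finset

theorem eq_univ_of_inv_card_smul_indVec_eq {K : ℕ} {S : Finset (Fin K)}
    (h : (#S : ℝ)⁻¹ • indVec S = (K : ℝ)⁻¹ • 1) : S = univ := by
  refine eq_univ_of_forall fun k => ?_
  by_contra hk
  have hK : (K : ℝ) ≠ 0 := Nat.cast_ne_zero.mpr (Fin.pos k).ne'
  simpa [indVec, hk, hK] using (congrFun h k).symm

theorem subsingleton_of_disjoint_of_forall_eq_univ {ι α : Type*} [Fintype α] [Nonempty α]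
    {L : ι → Finset α} (hdisj : ∀ i j, i ≠ j → Disjoint (L i) (L j)) (huniv : ∀ j, L j = univ) :
    Subsingleton ι := by
  refine ⟨fun i j => by_contra fun hij => ?_⟩
  have := hdisj i j hij
  rw [huniv, huniv, disjoint_self] at this
  exact univ_nonempty.ne_empty this

theorem lvpir_full_rank_partition_general {T K ℓ : ℕ} (hK : 0 < K)
    (H : Matrix (Fin T) (Fin K) ℝ)
    (hrank : LinearIndependent ℝ (Matrix.transpose H))
    (L : Fin ℓ → Finset (Fin K))
    (hLdisj : ∀ j j', j ≠ j' → Disjoint (L j) (L j'))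
    (hLcover : ∀ k : Fin K, ∃ j, k ∈ L j)
    (hpriv : ∀ j, (((L j).card : ℝ))⁻¹ • H.mulVec (indVec (L j))
      = ((K : ℝ))⁻¹ • H.mulVec 1) :
    ℓ = 1 ∧ (∀ j, L j = Finset.univ) ∧
      ((K : ℝ))⁻¹ * ∑ j, ((L j).card : ℝ) ^ 2 = K := by
  have hinj : Function.Injective H.mulVec := Matrix.mulVec_injective_iff.mpr hrank
  have huniv : ∀ j, L j = univ := fun j =>
    eq_univ_of_inv_card_smul_indVec_eq (hinj (by simpa only [Matrix.mulVec_smul] using hpriv j))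
  have : Nonempty (Fin K) := Fin.pos_iff_nonempty.mp hK
  have hℓ : ℓ = 1 := by
    obtain ⟨j, -⟩ := hLcover (Classical.arbitrary _)
    simpa using le_antisymm
      (Fintype.card_le_one_iff_subsingleton.mpr
        (subsingleton_of_disjoint_of_forall_eq_univ hLdisj huniv))
      (Fintype.card_pos_iff.mpr ⟨j⟩)
  refine ⟨hℓ, huniv, ?_⟩
  subst hℓ
  rw [Fin.sum_univ_one, huniv 0, card_univ, Fintype.card_fin]
  field_simp

/-- if `H` has full column rank, then the only partition of `{1,…,K}` all of
whose blocks satisfy the latent-variable privacy condition is the trivial one, and its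
average download cost `(1/K)·Σ_j |L_j|²` equals `K`. -/
theorem lvpir_full_rank_partition {T K ℓ : ℕ} (hK : 0 < K)
    (H : Matrix (Fin T) (Fin K) ℝ)
    (hrank : LinearIndependent ℝ (Matrix.transpose H))
    (L : Fin ℓ → Finset (Fin K))
    (hLne : ∀ j, (L j).Nonempty)
    (hLdisj : ∀ j j', j ≠ j' → Disjoint (L j) (L j'))
    (hLcover : ∀ k : Fin K, ∃ j, k ∈ L j)
    (hpriv : ∀ j, (((L j).card : ℝ))⁻¹ • H.mulVec (indVec (L j))
      = ((K : ℝ))⁻¹ • H.mulVec 1) :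
    ℓ = 1 ∧ (∀ j, L j = Finset.univ) ∧
      ((K : ℝ))⁻¹ * ∑ j, ((L j).card : ℝ) ^ 2 = K :=
  lvpir_full_rank_partition_general hK H hrank L hLdisj hLcover hpriv
end
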